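/- arXiv:1312.6711 — 6 statements merged into one kernel-verified Lean document; each statement's English description precedes it below -/
import Mathlib

section
/- Let $k$ be a complete nonarchimedean valued field and $\mathcal{A}$ a Banach $k$-algebra whose norm takes values in the value group of $k$ (i.e. $\|\mathcal{A}\| \subseteq |k|$). Then for any idempotent $\bar{e}$ in the residue algebra $\overline{\mathcal{A}} = \mathcal{A}(1)/\mathcal{A}(1-)$, there exists an idempotent $e \in \mathcal{A}(1)$ whose image in $\overline{\mathcal{A}}$ is $\bar{e}$. -/
/-!
The cubic `e ↦ 3e² - 2e³` fixes idempotents and squares the defect `x = e² - e`: its image `f`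
satisfies `f² - f = x² (4x - 3)` and `f - e = x - 2ex`. In an ultrametric normed ring these
have norms at most `‖x‖²` and `‖x‖` as long as `‖e‖ ≤ 1`, so iterating from `a` gives a
Cauchy sequence in the unit ball with defects `‖a² - a‖ ^ 2 ^ n`. Its limit is an idempotent,
and by the ultrametric inequality it stays within `‖a² - a‖ < 1` of `a`.
-/

open Filter Topology

lemma pow_two_pow_le_pow_of_le_one {r : ℝ} (h₀ : 0 ≤ r) (h₁ : r ≤ 1) (n : ℕ) :
    r ^ 2 ^ n ≤ r ^ n :=
  pow_le_pow_of_le_one h₀ h₁ Nat.lt_two_pow_self.le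

namespace IsUltrametricDist

section AddGroup

variable {G : Type*} [SeminormedAddGroup G] [IsUltrametricDist G]

lemma norm_sub_le_max (x y : G) : ‖x - y‖ ≤ max ‖x‖ ‖y‖ := by
  simpa [sub_eq_add_neg] using norm_add_le_max x (-y)

lemma norm_sub_le_of_forall_norm_succ_sub_le {u : ℕ → G} {C : ℝ} (hC : 0 ≤ C)
    (hu : ∀ n, ‖u (n + 1) - u n‖ ≤ C) (n : ℕ) : ‖u n - u 0‖ ≤ C := by
  induction n with
  | zero => simpa using hC
  | succ n ih =>
    rw [← sub_add_sub_cancel (u (n + 1)) (u n) (u 0)]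
    exact (norm_add_le_max _ _).trans (max_le (hu n) ih)

end AddGroup

variable {A : Type*} [NonUnitalNormedRing A] [IsUltrametricDist A]

lemma norm_mul_self_sub_self_le_one {e : A} (he : ‖e‖ ≤ 1) : ‖e * e - e‖ ≤ 1 :=
  (norm_sub_le_max _ _).trans <|
    max_le ((norm_mul_le _ _).trans (mul_le_one₀ he (norm_nonneg _) he)) he

end IsUltrametricDist

open IsUltrametricDist

section IdempotentStep

variable {A : Type*}

def idempotentStep [NonUnitalRing A] (e : A) : A := 3 • (e * e) - 2 • (e * e * e)

lemma idempotentStep_sub_self [NonUnitalRing A] (e : A) :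
    idempotentStep e - e = (e * e - e) - 2 • (e * (e * e - e)) := by
  unfold idempotentStep; noncomm_ring

lemma mul_self_sub_self_idempotentStep [NonUnitalRing A] (e : A) :
    idempotentStep e * idempotentStep e - idempotentStep e =
      4 • ((e * e - e) * (e * e - e) * (e * e - e)) - 3 • ((e * e - e) * (e * e - e)) := by
  unfold idempotentStep; noncomm_ring

variable [NonUnitalNormedRing A] [IsUltrametricDist A]

lemma norm_idempotentStep_sub_self_le {e : A} (he : ‖e‖ ≤ 1) :
    ‖idempotentStep e - e‖ ≤ ‖e * e - e‖ := by
  rw [idempotentStep_sub_self]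
  refine (norm_sub_le_max _ _).trans (max_le le_rfl ?_)
  calc ‖2 • (e * (e * e - e))‖ ≤ ‖e * (e * e - e)‖ := norm_nsmul_le _ _
    _ ≤ ‖e‖ * ‖e * e - e‖ := norm_mul_le _ _
    _ ≤ ‖e * e - e‖ := mul_le_of_le_one_left (norm_nonneg _) he

lemma norm_idempotentStep_le_one {e : A} (he : ‖e‖ ≤ 1) : ‖idempotentStep e‖ ≤ 1 := by
  rw [← sub_add_cancel (idempotentStep e) e]
  exact (norm_add_le_max _ _).trans <|
    max_le ((norm_idempotentStep_sub_self_le he).trans (norm_mul_self_sub_self_le_one he)) he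

lemma norm_mul_self_sub_self_idempotentStep_le {e : A} (he : ‖e‖ ≤ 1) :
    ‖idempotentStep e * idempotentStep e - idempotentStep e‖ ≤ ‖e * e - e‖ ^ 2 := by
  set x := e * e - e
  have hx : ‖x‖ ≤ 1 := norm_mul_self_sub_self_le_one he
  have hxx : ‖x * x‖ ≤ ‖x‖ ^ 2 := (norm_mul_le _ _).trans_eq (sq _).symm
  rw [mul_self_sub_self_idempotentStep]
  refine (norm_sub_le_max _ _).trans (max_le ?_ ((norm_nsmul_le _ _).trans hxx))
  calc ‖4 • (x * x * x)‖ ≤ ‖x * x * x‖ := norm_nsmul_le _ _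
    _ ≤ ‖x * x‖ * ‖x‖ := norm_mul_le _ _
    _ ≤ ‖x‖ ^ 2 := mul_le_of_le_one_right (norm_nonneg _) hx |>.trans hxx

variable {a : A} (ha : ‖a‖ ≤ 1)
include ha

lemma norm_iterate_idempotentStep_le_one (n : ℕ) : ‖idempotentStep^[n] a‖ ≤ 1 := by
  induction n with
  | zero => exact ha
  | succ n ih => rw [Function.iterate_succ_apply']; exact norm_idempotentStep_le_one ih

lemma norm_mul_self_sub_self_iterate_idempotentStep_le (n : ℕ) :
    ‖idempotentStep^[n] a * idempotentStep^[n] a - idempotentStep^[n] a‖ ≤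
      ‖a * a - a‖ ^ 2 ^ n := by
  induction n with
  | zero => simp
  | succ n ih =>
    rw [Function.iterate_succ_apply', pow_succ, pow_mul]
    exact (norm_mul_self_sub_self_idempotentStep_le (norm_iterate_idempotentStep_le_one ha n)).trans
      (pow_le_pow_left₀ (norm_nonneg _) ih 2)

lemma norm_iterate_idempotentStep_succ_sub_le (n : ℕ) :
    ‖idempotentStep^[n + 1] a - idempotentStep^[n] a‖ ≤ ‖a * a - a‖ ^ 2 ^ n := by
  rw [Function.iterate_succ_apply']
  exact (norm_idempotentStep_sub_self_le (norm_iterate_idempotentStep_le_one ha n)).trans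
    (norm_mul_self_sub_self_iterate_idempotentStep_le ha n)

lemma norm_iterate_idempotentStep_sub_le (n : ℕ) :
    ‖idempotentStep^[n] a - a‖ ≤ ‖a * a - a‖ :=
  norm_sub_le_of_forall_norm_succ_sub_le (u := (idempotentStep^[·] a)) (norm_nonneg _) (fun m ↦
    (norm_iterate_idempotentStep_succ_sub_le ha m).trans <|
      pow_le_of_le_one (norm_nonneg _) (norm_mul_self_sub_self_le_one ha)
        (pow_ne_zero _ two_ne_zero)) n

variable (hid : ‖a * a - a‖ < 1)
include hid

lemma cauchySeq_iterate_idempotentStep : CauchySeq (idempotentStep^[·] a) :=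
  cauchySeq_of_le_geometric _ 1 hid fun n ↦ by
    rw [dist_comm, dist_eq_norm, one_mul]
    exact (norm_iterate_idempotentStep_succ_sub_le ha n).trans
      (pow_two_pow_le_pow_of_le_one (norm_nonneg _) hid.le n)

lemma tendsto_mul_self_sub_self_iterate_idempotentStep :
    Tendsto (fun n ↦ idempotentStep^[n] a * idempotentStep^[n] a - idempotentStep^[n] a)
      atTop (𝓝 0) :=
  squeeze_zero_norm (fun n ↦ (norm_mul_self_sub_self_iterate_idempotentStep_le ha n).trans
      (pow_two_pow_le_pow_of_le_one (norm_nonneg _) hid.le n))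
    (tendsto_pow_atTop_nhds_zero_of_lt_one (norm_nonneg _) hid)

end IdempotentStep

theorem idempotent_lift_general {A : Type*} [NormedRing A] [IsUltrametricDist A] [CompleteSpace A]
    (a : A) (ha : ‖a‖ ≤ 1) (hid : ‖a * a - a‖ < 1) :
    ∃ e : A, e * e = e ∧ ‖e‖ ≤ 1 ∧ ‖e - a‖ < 1 := by
  obtain ⟨e, hlim⟩ := cauchySeq_tendsto_of_complete (cauchySeq_iterate_idempotentStep ha hid)
  refine ⟨e, ?_, ?_, ?_⟩
  · exact sub_eq_zero.mp <| tendsto_nhds_unique ((hlim.mul hlim).sub hlim)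
      (tendsto_mul_self_sub_self_iterate_idempotentStep ha hid)
  · exact le_of_tendsto' hlim.norm (norm_iterate_idempotentStep_le_one ha)
  · exact (le_of_tendsto' (hlim.sub_const a).norm (norm_iterate_idempotentStep_sub_le ha)).trans_lt
      hid

/-- Lifting of idempotents: in a Banach algebra over a complete nonarchimedean field whose
norm takes values in `|k|`, any idempotent of the residue algebra `𝒜(1)/𝒜(1-)`
(given by a lift `a ∈ 𝒜(1)` with `‖a² - a‖ < 1`) lifts to an honest idempotent
`e ∈ 𝒜(1)` with the same reduction (`‖e - a‖ < 1`). -/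
theorem idempotent_lift {k A : Type*} [NontriviallyNormedField k] [CompleteSpace k]
    [IsUltrametricDist k] [NormedRing A] [NormOneClass A] [IsUltrametricDist A]
    [CompleteSpace A] [NormedAlgebra k A]
    (hval : ∀ a : A, ∃ c : k, ‖a‖ = ‖c‖)
    (a : A) (ha : ‖a‖ ≤ 1) (hid : ‖a * a - a‖ < 1) :
    ∃ e : A, e * e = e ∧ ‖e‖ ≤ 1 ∧ ‖e - a‖ < 1 :=
  idempotent_lift_general a ha hid
end

section
/- Let $\mathcal{A}$ be a Banach $k$-algebra over a complete nonarchimedean field $k$, and let $P_0 \in \mathcal{A}(1)$ satisfy $\|P_0^2 - P_0\| < 1$. Define the sequence $P_{i+1} = -2P_i^3 + 3P_i^2$. Then $\|P_{i}^2 - P_{i}\| \le \|P_0^2 - P_0\|^{2^i}$ for all $i$, and the sequence $(P_i)$ converges to an idempotent $e \in \mathcal{A}(1)$ with $\|e - P_0\| < 1$. -/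
/-!
The Newton map `f(x) = 3x² - 2x³` satisfies `f(x)² - f(x) = (2x - 3)(2x + 1)(x² - x)²` and
`f(x) - x = (1 - 2x)(x² - x)`. In an ultrametric normed ring with `‖1‖ = 1` the closed unit
ball is a subring, so on it both cofactors have norm at most `1`: the defect `‖x² - x‖` is
squared at each step while the step size is bounded by the defect. Hence the iterates converge
quadratically, the limit is an idempotent, and by the ultrametric inequality it stays within
`‖P₀² - P₀‖ < 1` of `P₀`.
-/

open Filter Topology

namespace IsUltrametricDist

lemma dist_le_of_forall_dist_succ_le {X : Type*} [PseudoMetricSpace X] [IsUltrametricDist X]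
    {u : ℕ → X} {C : ℝ} (hC : 0 ≤ C) (hu : ∀ n, dist (u (n + 1)) (u n) ≤ C) (n : ℕ) :
    dist (u n) (u 0) ≤ C := by
  induction n with
  | zero => simpa using hC
  | succ n ih => exact (dist_triangle_max _ (u n) _).trans (max_le (hu n) ih)

variable (R : Type*) [SeminormedRing R] [NormOneClass R] [IsUltrametricDist R]

def closedUnitBallSubring : Subring R where
  carrier := Metric.closedBall 0 1
  mul_mem' {x y} hx hy := by
    simp only [mem_closedBall_zero_iff] at hx hy ⊢
    exact (norm_mul_le_of_le hx hy).trans_eq (one_mul 1)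
  one_mem' := by simp
  add_mem' {x y} hx hy := by
    simp only [mem_closedBall_zero_iff] at hx hy ⊢
    exact (norm_add_le_max x y).trans (max_le hx hy)
  zero_mem' := by simp
  neg_mem' := by simp

variable {R}

@[simp]
lemma mem_closedUnitBallSubring {x : R} : x ∈ closedUnitBallSubring R ↔ ‖x‖ ≤ 1 :=
  mem_closedBall_zero_iff

end IsUltrametricDist

open IsUltrametricDist

section Ring

variable {R : Type*} [Ring R]

def idempotentNewtonStep (x : R) : R := -2 * x ^ 3 + 3 * x ^ 2

lemma idempotentNewtonStep_mul_self_sub (x : R) :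
    idempotentNewtonStep x * idempotentNewtonStep x - idempotentNewtonStep x
      = (2 * x - 3) * (2 * x + 1) * (x * x - x) ^ 2 := by
  unfold idempotentNewtonStep
  noncomm_ring

lemma idempotentNewtonStep_sub (x : R) :
    idempotentNewtonStep x - x = (1 - 2 * x) * (x * x - x) := by
  unfold idempotentNewtonStep
  noncomm_ring

end Ring

lemma norm_mul_le_of_norm_le_one_left {R : Type*} [SeminormedRing R] {a : R} (ha : ‖a‖ ≤ 1)
    (b : R) : ‖a * b‖ ≤ ‖b‖ :=
  (norm_mul_le_of_le ha le_rfl).trans_eq (one_mul _)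

section Ultrametric

variable {R : Type*} [SeminormedRing R] [NormOneClass R] [IsUltrametricDist R] {x : R}

lemma norm_idempotentNewtonStep_le_one (hx : ‖x‖ ≤ 1) : ‖idempotentNewtonStep x‖ ≤ 1 := by
  replace hx := mem_closedUnitBallSubring.mpr hx
  exact mem_closedUnitBallSubring.mp <| add_mem
    (mul_mem (neg_mem (ofNat_mem _ 2)) (pow_mem hx 3)) (mul_mem (ofNat_mem _ 3) (pow_mem hx 2))

lemma norm_idempotentNewtonStep_mul_self_sub_le (hx : ‖x‖ ≤ 1) :
    ‖idempotentNewtonStep x * idempotentNewtonStep x - idempotentNewtonStep x‖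
      ≤ ‖x * x - x‖ ^ 2 := by
  replace hx := mem_closedUnitBallSubring.mpr hx
  have hcof : ‖(2 * x - 3) * (2 * x + 1)‖ ≤ 1 := mem_closedUnitBallSubring.mp <| mul_mem
    (sub_mem (mul_mem (ofNat_mem _ 2) hx) (ofNat_mem _ 3))
    (add_mem (mul_mem (ofNat_mem _ 2) hx) (one_mem _))
  rw [idempotentNewtonStep_mul_self_sub]
  exact (norm_mul_le_of_norm_le_one_left hcof _).trans (norm_pow_le _ 2)

lemma norm_idempotentNewtonStep_sub_le (hx : ‖x‖ ≤ 1) :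
    ‖idempotentNewtonStep x - x‖ ≤ ‖x * x - x‖ := by
  replace hx := mem_closedUnitBallSubring.mpr hx
  have hcof : ‖1 - 2 * x‖ ≤ 1 :=
    mem_closedUnitBallSubring.mp <| sub_mem (one_mem _) (mul_mem (ofNat_mem _ 2) hx)
  rw [idempotentNewtonStep_sub]
  exact norm_mul_le_of_norm_le_one_left hcof _

end Ultrametric

namespace IdempotentNewton

variable {R : Type*} [SeminormedRing R] [NormOneClass R] [IsUltrametricDist R] {P : ℕ → R}

lemma norm_le_one (hP : ∀ i, P (i + 1) = idempotentNewtonStep (P i)) (hP0 : ‖P 0‖ ≤ 1)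
    (i : ℕ) : ‖P i‖ ≤ 1 := by
  induction i with
  | zero => exact hP0
  | succ i ih => exact hP i ▸ norm_idempotentNewtonStep_le_one ih

lemma norm_mul_self_sub_le (hP : ∀ i, P (i + 1) = idempotentNewtonStep (P i))
    (hP0 : ‖P 0‖ ≤ 1) (i : ℕ) : ‖P i * P i - P i‖ ≤ ‖P 0 * P 0 - P 0‖ ^ 2 ^ i := by
  induction i with
  | zero => simp
  | succ i ih =>
    calc ‖P (i + 1) * P (i + 1) - P (i + 1)‖ ≤ ‖P i * P i - P i‖ ^ 2 :=
          hP i ▸ norm_idempotentNewtonStep_mul_self_sub_le (norm_le_one hP hP0 i)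
      _ ≤ (‖P 0 * P 0 - P 0‖ ^ 2 ^ i) ^ 2 := by gcongr
      _ = ‖P 0 * P 0 - P 0‖ ^ 2 ^ (i + 1) := by rw [← pow_mul, pow_succ]

lemma norm_succ_sub_le (hP : ∀ i, P (i + 1) = idempotentNewtonStep (P i)) (hP0 : ‖P 0‖ ≤ 1)
    (i : ℕ) : ‖P (i + 1) - P i‖ ≤ ‖P 0 * P 0 - P 0‖ ^ 2 ^ i :=
  (hP i ▸ norm_idempotentNewtonStep_sub_le (norm_le_one hP hP0 i)).trans
    (norm_mul_self_sub_le hP hP0 i)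

lemma cauchySeq (hP : ∀ i, P (i + 1) = idempotentNewtonStep (P i)) (hP0 : ‖P 0‖ ≤ 1)
    (h : ‖P 0 * P 0 - P 0‖ < 1) : CauchySeq P := by
  refine cauchySeq_of_le_geometric _ 1 h fun i ↦ ?_
  rw [dist_comm, dist_eq_norm, one_mul]
  exact (norm_succ_sub_le hP hP0 i).trans
    (pow_le_pow_of_le_one (norm_nonneg _) h.le Nat.lt_two_pow_self.le)

lemma tendsto_mul_self_sub_zero (hP : ∀ i, P (i + 1) = idempotentNewtonStep (P i))
    (hP0 : ‖P 0‖ ≤ 1) (h : ‖P 0 * P 0 - P 0‖ < 1) :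
    Tendsto (fun i ↦ P i * P i - P i) atTop (𝓝 0) :=
  squeeze_zero_norm (norm_mul_self_sub_le hP hP0) <|
    (tendsto_pow_atTop_nhds_zero_of_lt_one (norm_nonneg _) h).comp
      (tendsto_pow_atTop_atTop_of_one_lt one_lt_two)

lemma norm_sub_le (hP : ∀ i, P (i + 1) = idempotentNewtonStep (P i)) (hP0 : ‖P 0‖ ≤ 1)
    (h : ‖P 0 * P 0 - P 0‖ ≤ 1) (i : ℕ) : ‖P i - P 0‖ ≤ ‖P 0 * P 0 - P 0‖ := by
  rw [← dist_eq_norm]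
  refine dist_le_of_forall_dist_succ_le (norm_nonneg _) (fun n ↦ ?_) i
  rw [dist_eq_norm]
  exact (norm_succ_sub_le hP hP0 n).trans
    (pow_le_of_le_one (norm_nonneg _) h (pow_ne_zero n two_ne_zero))

end IdempotentNewton

theorem newton_idempotent_general {A : Type*} [NormedRing A] [NormOneClass A] [IsUltrametricDist A]
    [CompleteSpace A]
    (P : ℕ → A) (hP0 : ‖P 0‖ ≤ 1) (h : ‖P 0 * P 0 - P 0‖ < 1)
    (hrec : ∀ i, P (i + 1) = -2 * (P i) ^ 3 + 3 * (P i) ^ 2) :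
    (∀ i, ‖P i * P i - P i‖ ≤ ‖P 0 * P 0 - P 0‖ ^ (2 ^ i)) ∧
    ∃ e : A, Filter.Tendsto P Filter.atTop (nhds e) ∧ e * e = e ∧ ‖e‖ ≤ 1 ∧ ‖e - P 0‖ < 1 := by
  have hP : ∀ i, P (i + 1) = idempotentNewtonStep (P i) := hrec
  obtain ⟨e, he⟩ := cauchySeq_tendsto_of_complete (IdempotentNewton.cauchySeq hP hP0 h)
  refine ⟨IdempotentNewton.norm_mul_self_sub_le hP hP0, e, he, ?_, ?_, ?_⟩
  · rw [← sub_eq_zero]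
    exact tendsto_nhds_unique ((he.mul he).sub he)
      (IdempotentNewton.tendsto_mul_self_sub_zero hP hP0 h)
  · exact le_of_tendsto' he.norm (IdempotentNewton.norm_le_one hP hP0)
  · refine (le_of_tendsto' (he.sub_const (P 0)).norm ?_).trans_lt h
    exact IdempotentNewton.norm_sub_le hP hP0 h.le

/-- Newton-type iteration for idempotents: if `‖P₀‖ ≤ 1` and `‖P₀² - P₀‖ < 1` in a Banach
algebra over a complete nonarchimedean field, the sequence `P_{i+1} = -2P_i³ + 3P_i²`
satisfies `‖P_i² - P_i‖ ≤ ‖P₀² - P₀‖^(2^i)` and converges to an idempotent `e ∈ 𝒜(1)`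
with `‖e - P₀‖ < 1`. -/
theorem newton_idempotent {k A : Type*} [NontriviallyNormedField k] [CompleteSpace k]
    [IsUltrametricDist k] [NormedRing A] [NormOneClass A] [IsUltrametricDist A]
    [CompleteSpace A] [NormedAlgebra k A]
    (P : ℕ → A) (hP0 : ‖P 0‖ ≤ 1) (h : ‖P 0 * P 0 - P 0‖ < 1)
    (hrec : ∀ i, P (i + 1) = -2 * (P i) ^ 3 + 3 * (P i) ^ 2) :
    (∀ i, ‖P i * P i - P i‖ ≤ ‖P 0 * P 0 - P 0‖ ^ (2 ^ i)) ∧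
    ∃ e : A, Filter.Tendsto P Filter.atTop (nhds e) ∧ e * e = e ∧ ‖e‖ ≤ 1 ∧ ‖e - P 0‖ < 1 :=
  newton_idempotent_general P hP0 h hrec
end

section
/- Let $\mathcal{A}$ be a Banach $k$-algebra with $\|\mathcal{A}\| \subseteq |k|$ over a complete nonarchimedean field $k$, and let $e \in \mathcal{A}(1)$ be an idempotent whose image $\bar{e}$ in $\overline{\mathcal{A}}$ is central. Then $e$ is central in $\mathcal{A}$. -/
/-!
Write `D x = e x - x e`. Since every norm is the absolute value of a scalar, any nonzero `x` can be
rescaled into the unit sphere, so the hypothesis `‖D a‖ < 1` on the unit ball gives `‖D x‖ < ‖x‖`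
for all `x ≠ 0`. For an idempotent `e` the corners `e a (1 - e)` and `(1 - e) a e` are
eigenvectors of `D` with eigenvalues `1` and `-1`, so they vanish, and `e a - a e` is their
difference.
-/

section Rescaling

variable {k E F : Type*} [NormedField k] [NormedAddCommGroup E] [NormedSpace k E]
  [SeminormedAddCommGroup F] [NormedSpace k F]

theorem norm_apply_lt_norm_of_norm_lt_one_on_ball (hval : ∀ x : E, ∃ c : k, ‖x‖ = ‖c‖)
    (f : E →ₗ[k] F) (hf : ∀ x : E, ‖x‖ ≤ 1 → ‖f x‖ < 1) {x : E} (hx : x ≠ 0) :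
    ‖f x‖ < ‖x‖ := by
  obtain ⟨c, hxc⟩ := hval x
  have hc : ‖c‖ ≠ 0 := hxc ▸ norm_ne_zero_iff.mpr hx
  have hunit : ‖c⁻¹ • x‖ = 1 := by
    rw [norm_smul, norm_inv, hxc, inv_mul_cancel₀ hc]
  calc ‖f x‖ = ‖c‖ * ‖f (c⁻¹ • x)‖ := by
        rw [map_smul, norm_smul, ← mul_assoc, norm_inv, mul_inv_cancel₀ hc, one_mul]
    _ < ‖c‖ * 1 := mul_lt_mul_of_pos_left (hf _ hunit.le) (norm_pos_iff.mpr (by simpa using hc))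
    _ = ‖x‖ := by rw [mul_one, hxc]

theorem eq_zero_of_norm_le_norm_apply (hval : ∀ x : E, ∃ c : k, ‖x‖ = ‖c‖)
    (f : E →ₗ[k] F) (hf : ∀ x : E, ‖x‖ ≤ 1 → ‖f x‖ < 1) {x : E} (hx : ‖x‖ ≤ ‖f x‖) :
    x = 0 := by
  by_contra hx0
  exact (norm_apply_lt_norm_of_norm_lt_one_on_ball hval f hf hx0).not_ge hx

end Rescaling

theorem mul_sub_mul_eq_mul_mul_one_sub_sub {R : Type*} [Ring R] (e a : R) :
    e * a - a * e = e * a * (1 - e) - (1 - e) * a * e := by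
  noncomm_ring

namespace IsIdempotentElem

variable {R : Type*} [Ring R] {e : R}

theorem commutator_mul_mul_one_sub (h : IsIdempotentElem e) (a : R) :
    e * (e * a * (1 - e)) - e * a * (1 - e) * e = e * a * (1 - e) := by
  rw [← mul_assoc, ← mul_assoc, h.eq, mul_assoc _ (1 - e), h.one_sub_mul_self, mul_zero,
    sub_zero]

theorem commutator_one_sub_mul_mul (h : IsIdempotentElem e) (a : R) :
    e * ((1 - e) * a * e) - (1 - e) * a * e * e = -((1 - e) * a * e) := by
  rw [← mul_assoc, ← mul_assoc, h.mul_one_sub_self, zero_mul, zero_mul, mul_assoc _ e, h.eq,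
    zero_sub]

end IsIdempotentElem

theorem central_of_central_reduction_general {k A : Type*} [NontriviallyNormedField k]
    [NormedRing A] [NormedAlgebra k A]
    (hval : ∀ a : A, ∃ c : k, ‖a‖ = ‖c‖)
    (e : A) (hid : e * e = e)
    (hc : ∀ a : A, ‖a‖ ≤ 1 → ‖e * a - a * e‖ < 1) :
    ∀ a : A, e * a = a * e := by
  intro a
  have hid : IsIdempotentElem e := hid
  have hvanish : ∀ x : A, ‖x‖ ≤ ‖e * x - x * e‖ → x = 0 :=
    fun _ => eq_zero_of_norm_le_norm_apply hval
      (LinearMap.mulLeft k e - LinearMap.mulRight k e) hc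
  have hleft : e * a * (1 - e) = 0 :=
    hvanish _ (by rw [hid.commutator_mul_mul_one_sub])
  have hright : (1 - e) * a * e = 0 :=
    hvanish _ (by rw [hid.commutator_one_sub_mul_mul, norm_neg])
  rw [← sub_eq_zero, mul_sub_mul_eq_mul_mul_one_sub_sub, hleft, hright, sub_zero]

/-- If an idempotent `e` in the unit ball of a Banach algebra with `‖𝒜‖ ⊆ |k|` has central
reduction (i.e. `‖ea - ae‖ < 1` for all `a` in the unit ball), then `e` is central in `𝒜`. -/
theorem central_of_central_reduction {k A : Type*} [NontriviallyNormedField k]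
    [CompleteSpace k] [IsUltrametricDist k] [NormedRing A] [NormOneClass A]
    [IsUltrametricDist A] [CompleteSpace A] [NormedAlgebra k A]
    (hval : ∀ a : A, ∃ c : k, ‖a‖ = ‖c‖)
    (e : A) (he : ‖e‖ ≤ 1) (hid : e * e = e)
    (hc : ∀ a : A, ‖a‖ ≤ 1 → ‖e * a - a * e‖ < 1) :
    ∀ a : A, e * a = a * e :=
  central_of_central_reduction_general hval e hid hc
end

section
/- Let $k$ be a local field and $\mathcal{A}$ a Banach $k$-algebra with $\|\mathcal{A}\| = |k|$ such that $\overline{\mathcal{A}}$ is a finite dimensional simple $\bar{k}$-algebra. Then for every nonzero cyclic left $\mathcal{A}$-module $M$, the associated ring homomorphism $\rho_M : \mathcal{A} \to \mathrm{End}_k(M)$ is injective; i.e., $\mathcal{A}$ acts faithfully on every nonzero cyclic left module. -/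
instance instSubtypeUltrametric {α : Type*} [PseudoMetricSpace α] [IsUltrametricDist α]
    {p : α → Prop} : IsUltrametricDist (Subtype p) :=
  ⟨fun x y z => IsUltrametricDist.dist_triangle_max x.1 y.1 z.1⟩

/-- The closed unit ball of an ultrametric normed ring, as a subring. -/
def unitBall (A : Type*) [NormedRing A] [NormOneClass A] [IsUltrametricDist A] : Subring A where
  carrier := {a | ‖a‖ ≤ 1}
  mul_mem' {a b} ha hb := le_trans (norm_mul_le a b) (mul_le_one₀ ha (norm_nonneg b) hb)
  one_mem' := le_of_eq norm_one
  add_mem' {a b} ha hb := le_trans (IsUltrametricDist.norm_add_le_max a b) (max_le ha hb)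
  zero_mem' := by simp
  neg_mem' {a} ha := by simpa using ha

/-- The congruence relation on the unit ball identifying elements whose difference has
norm `< 1`. -/
def redCon (A : Type*) [NormedRing A] [NormOneClass A] [IsUltrametricDist A] :
    RingCon (unitBall A) where
  r a b := ‖(a : A) - (b : A)‖ < 1
  iseqv := by
    refine ⟨fun a => by simp, fun {a b} h => ?_, fun {a b c} h1 h2 => ?_⟩
    · rwa [norm_sub_rev]
    · have : (a : A) - c = ((a : A) - b) + ((b : A) - c) := by abel
      rw [this]
      exact lt_of_le_of_lt (IsUltrametricDist.norm_add_le_max _ _) (max_lt h1 h2)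
  mul' {w x y z} h1 h2 := by
    have key : ((w * y : unitBall A) : A) - ((x * z : unitBall A) : A)
        = (w : A) * ((y : A) - (z : A)) + ((w : A) - (x : A)) * (z : A) := by
      push_cast; rw [mul_sub, sub_mul]; abel
    show ‖((w * y : unitBall A) : A) - ((x * z : unitBall A) : A)‖ < 1
    rw [key]
    refine lt_of_le_of_lt (IsUltrametricDist.norm_add_le_max _ _) (max_lt ?_ ?_)
    · exact lt_of_le_of_lt (norm_mul_le _ _)
        (lt_of_le_of_lt (mul_le_of_le_one_left (norm_nonneg _) w.2) h2)
    · exact lt_of_le_of_lt (norm_mul_le _ _)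
        (lt_of_le_of_lt (mul_le_of_le_one_right (norm_nonneg _) z.2) h1)
  add' {w x y z} h1 h2 := by
    have key : ((w + y : unitBall A) : A) - ((x + z : unitBall A) : A)
        = ((w : A) - (x : A)) + ((y : A) - (z : A)) := by push_cast; abel
    show ‖((w + y : unitBall A) : A) - ((x + z : unitBall A) : A)‖ < 1
    rw [key]
    exact lt_of_le_of_lt (IsUltrametricDist.norm_add_le_max _ _) (max_lt h1 h2)

/-- The residue ring `𝒜(1)/𝒜(1-)` of an ultrametric normed ring. -/
abbrev Red (A : Type*) [NormedRing A] [NormOneClass A] [IsUltrametricDist A] : Type _ :=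
  (redCon A).Quotient

/-!
A nonzero two-sided ideal `J` of `𝒜` contains, after rescaling by a scalar, an element of
norm `1`. Its residue is nonzero, so by simplicity of the residue ring the residues of
`J ∩ 𝒜(1)` contain `1`: `J` contains some `b` with `‖1 - b‖ < 1`, a unit by completeness.
Hence `𝒜` is a simple ring, and a simple ring acts faithfully on every nonzero module.
-/

namespace TwoSidedIdeal

variable {R S : Type*} [Ring R] [Ring S] {f : R →+* S}

theorem mem_map_of_surjective (hf : Function.Surjective f) {I : TwoSidedIdeal R} {y : S} :
    y ∈ I.map f ↔ ∃ x ∈ I, f x = y := by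
  refine ⟨fun hy ↦ ?_, fun ⟨x, hx, hxy⟩ ↦ hxy ▸ subset_span ⟨x, hx, rfl⟩⟩
  induction hy using span_induction with
  | mem y hy => exact hy
  | zero => exact ⟨0, I.zero_mem, map_zero f⟩
  | add _ _ _ _ h₁ h₂ =>
    obtain ⟨x₁, hx₁, rfl⟩ := h₁
    obtain ⟨x₂, hx₂, rfl⟩ := h₂
    exact ⟨x₁ + x₂, I.add_mem hx₁ hx₂, map_add f x₁ x₂⟩
  | neg _ _ h =>
    obtain ⟨x, hx, rfl⟩ := h
    exact ⟨-x, I.neg_mem hx, map_neg f x⟩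
  | left_absorb a _ _ h =>
    obtain ⟨r, rfl⟩ := hf a
    obtain ⟨x, hx, rfl⟩ := h
    exact ⟨r * x, I.mul_mem_left r x hx, map_mul f r x⟩
  | right_absorb b _ _ h =>
    obtain ⟨r, rfl⟩ := hf b
    obtain ⟨x, hx, rfl⟩ := h
    exact ⟨x * r, I.mul_mem_right x r hx, map_mul f x r⟩

theorem eq_top_of_isUnit_mem (I : TwoSidedIdeal R) {x : R} (hx : IsUnit x) (hxI : x ∈ I) :
    I = ⊤ := by
  obtain ⟨u, rfl⟩ := hx
  exact I.one_mem_iff.mp (by simpa using I.mul_mem_left (↑u⁻¹) _ hxI)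

end TwoSidedIdeal

instance AddMonoid.End.instNontrivial {M : Type*} [AddCommMonoid M] [Nontrivial M] :
    Nontrivial (AddMonoid.End M) :=
  let ⟨x, hx⟩ := exists_ne (0 : M)
  ⟨⟨1, 0, fun h ↦ hx (DFunLike.congr_fun h x)⟩⟩

section Residue

variable {A : Type*} [NormedRing A] [NormOneClass A] [IsUltrametricDist A]

theorem Red.coe_eq_coe_iff {a b : unitBall A} : (a : Red A) = b ↔ ‖(a : A) - b‖ < 1 :=
  RingCon.eq _

theorem Red.coe_eq_zero_iff {a : unitBall A} : (a : Red A) = 0 ↔ ‖(a : A)‖ < 1 := by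
  simpa using Red.coe_eq_coe_iff (b := (0 : unitBall A))

theorem Red.coe_eq_one_iff {a : unitBall A} : (a : Red A) = 1 ↔ ‖1 - (a : A)‖ < 1 := by
  simpa [norm_sub_rev] using Red.coe_eq_coe_iff (b := (1 : unitBall A))

def TwoSidedIdeal.red (J : TwoSidedIdeal A) : TwoSidedIdeal (Red A) :=
  (J.comap (unitBall A).subtype).map (redCon A).mk'

theorem TwoSidedIdeal.mem_red {J : TwoSidedIdeal A} {z : Red A} :
    z ∈ J.red ↔ ∃ b : unitBall A, (b : A) ∈ J ∧ (b : Red A) = z := by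
  simp [TwoSidedIdeal.red, TwoSidedIdeal.mem_map_of_surjective (redCon A).mk'_surjective,
    TwoSidedIdeal.mem_comap]

variable [CompleteSpace A] [IsSimpleRing (Red A)]

theorem TwoSidedIdeal.eq_top_of_norm_eq_one_mem (J : TwoSidedIdeal A) {a : A} (ha : ‖a‖ = 1)
    (haJ : a ∈ J) : J = ⊤ := by
  have hred_ne : ((⟨a, ha.le⟩ : unitBall A) : Red A) ≠ 0 := by
    simp [Red.coe_eq_zero_iff, ha]
  have hone : (1 : Red A) ∈ J.red :=
    IsSimpleRing.one_mem_of_ne_zero_mem _ hred_ne (J.mem_red.mpr ⟨_, haJ, rfl⟩)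
  obtain ⟨b, hbJ, hb⟩ := J.mem_red.mp hone
  have hb_unit : IsUnit (b : A) :=
    sub_sub_self (1 : A) b ▸ (Units.oneSub _ (Red.coe_eq_one_iff.mp hb)).isUnit
  exact J.eq_top_of_isUnit_mem hb_unit hbJ

end Residue

theorem isSimpleRing_of_isSimpleRing_red {k A : Type*} [NormedField k] [NormedRing A]
    [NormOneClass A] [IsUltrametricDist A] [CompleteSpace A] [NormedAlgebra k A]
    (hval : ∀ a : A, ∃ c : k, ‖a‖ = ‖c‖) [IsSimpleRing (Red A)] : IsSimpleRing A := by
  have : Nontrivial A := NormOneClass.nontrivial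
  refine .of_eq_bot_or_eq_top fun J ↦ or_iff_not_imp_left.mpr fun hJ ↦ ?_
  obtain ⟨a, haJ, ha : a ≠ 0⟩ := SetLike.exists_of_lt (bot_lt_iff_ne_bot.mpr hJ)
  obtain ⟨c, hc⟩ := hval a
  have hc0 : c ≠ 0 := by rintro rfl; simp_all
  refine J.eq_top_of_norm_eq_one_mem (a := c⁻¹ • a) ?_ ?_
  · rw [norm_smul, norm_inv, hc, inv_mul_cancel₀ (norm_ne_zero_iff.mpr hc0)]
  · rw [Algebra.smul_def]
    exact J.mul_mem_left _ _ haJ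

theorem faithful_on_cyclic_modules_general {k A : Type*} [NontriviallyNormedField k]
    [NormedRing A] [NormOneClass A] [IsUltrametricDist A] [CompleteSpace A]
    [NormedAlgebra k A]
    (hval : ∀ a : A, ∃ c : k, ‖a‖ = ‖c‖)
    (hsimple : IsSimpleRing (Red A)) :
    ∀ I : Ideal A, I ≠ ⊤ → ∀ a : A, (∀ x : A ⧸ I, a • x = 0) → a = 0 := by
  have : IsSimpleRing A := isSimpleRing_of_isSimpleRing_red hval
  intro I hI a ha
  have : Nontrivial (A ⧸ I) := Submodule.Quotient.nontrivial_iff.mpr hI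
  refine (injective_iff_map_eq_zero _).mp (Module.toAddMonoidEnd A (A ⧸ I)).injective a ?_
  ext x
  exact ha x

/-- Let `k` be a local field and `𝒜` a Banach `k`-algebra with `‖𝒜‖ = |k|` whose residue
algebra `𝒜(1)/𝒜(1-)` is a finite dimensional simple ring. Then `𝒜` acts faithfully on
every nonzero cyclic left module `𝒜/I`. -/
theorem faithful_on_cyclic_modules {k A : Type*} [NontriviallyNormedField k] [CompleteSpace k]
    [IsUltrametricDist k] [ProperSpace k]
    (ϖ : k) (hϖ0 : 0 < ‖ϖ‖) (hϖ1 : ‖ϖ‖ < 1)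
    (hdisc : ∀ x : k, x ≠ 0 → ∃ n : ℤ, ‖x‖ = ‖ϖ‖ ^ n)
    [NormedRing A] [NormOneClass A] [IsUltrametricDist A] [CompleteSpace A]
    [NormedAlgebra k A]
    (hval : ∀ a : A, ∃ c : k, ‖a‖ = ‖c‖) (hval' : ∀ c : k, ∃ a : A, ‖a‖ = ‖c‖)
    (hfin : Finite (Red A)) (hsimple : IsSimpleRing (Red A)) :
    ∀ I : Ideal A, I ≠ ⊤ → ∀ a : A, (∀ x : A ⧸ I, a • x = 0) → a = 0 :=
  faithful_on_cyclic_modules_general hval hsimple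
end

section
/- Let $k$ be a local field and $\mathcal{A}$ a Banach $k$-algebra with $\|\mathcal{A}\| = |k|$. If the residue algebra $\overline{\mathcal{A}}$ is a finite dimensional semisimple $\bar{k}$-algebra, then the underlying $k$-algebra of $\mathcal{A}$ is a finite dimensional semisimple $k$-algebra. -/
open Metric

theorem IsSemisimpleRing.eq_bot_of_forall_isNilpotent {R : Type*} [Ring R] [IsSemisimpleRing R]
    {I : Ideal R} (hI : ∀ x ∈ I, IsNilpotent x) : I = ⊥ := by
  obtain ⟨e, he, rfl⟩ := IsSemisimpleRing.ideal_eq_span_idempotent I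
  rw [he.eq_zero_of_isNilpotent (hI e (Ideal.mem_span_singleton_self e)),
    Ideal.span_singleton_eq_bot]

theorem Submodule.closedBall_subset_of_forall_exists_norm_sub_le {k E : Type*} [NormedField k]
    [SeminormedAddCommGroup E] [NormedSpace k E] {V : Submodule k E} (hV : IsClosed (V : Set E))
    {ϖ : k} (hϖ0 : ϖ ≠ 0) (hϖ1 : ‖ϖ‖ < 1)
    (h : ∀ a ∈ closedBall (0 : E) 1, ∃ v ∈ V, ‖a - v‖ ≤ ‖ϖ‖) :
    closedBall (0 : E) 1 ⊆ V := by
  have approx : ∀ n : ℕ, ∀ a ∈ closedBall (0 : E) 1, ∃ v ∈ V, ‖a - v‖ ≤ ‖ϖ‖ ^ n := by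
    intro n
    induction n with
    | zero => exact fun a ha => ⟨0, V.zero_mem, by simpa using ha⟩
    | succ n ih =>
      intro a ha
      obtain ⟨r, hrV, hr⟩ := h a ha
      have hb : ϖ⁻¹ • (a - r) ∈ closedBall (0 : E) 1 := by
        rw [mem_closedBall_zero_iff, norm_smul, norm_inv]
        exact inv_mul_le_one_of_le₀ hr (norm_nonneg ϖ)
      obtain ⟨v, hvV, hv⟩ := ih _ hb
      refine ⟨r + ϖ • v, V.add_mem hrV (V.smul_mem ϖ hvV), ?_⟩
      have hsplit : a - (r + ϖ • v) = ϖ • (ϖ⁻¹ • (a - r) - v) := by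
        rw [smul_sub, smul_inv_smul₀ hϖ0, sub_add_eq_sub_sub]
      rw [hsplit, norm_smul, pow_succ']
      exact mul_le_mul_of_nonneg_left hv (norm_nonneg ϖ)
  intro a ha
  refine hV.closure_subset (Metric.mem_closure_iff.mpr fun ε hε => ?_)
  obtain ⟨n, hn⟩ := exists_pow_lt_of_lt_one hε hϖ1
  obtain ⟨v, hvV, hv⟩ := approx n a ha
  exact ⟨v, hvV, (dist_eq_norm a v).trans_le hv |>.trans_lt hn⟩

theorem Submodule.eq_top_of_closedBall_subset {k E : Type*} [NontriviallyNormedField k]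
    [SeminormedAddCommGroup E] [NormedSpace k E] {V : Submodule k E}
    (hV : closedBall (0 : E) 1 ⊆ V) : V = ⊤ :=
  V.eq_top_of_nonempty_interior' ⟨0, mem_interior.mpr
    ⟨ball 0 1, ball_subset_closedBall.trans hV, isOpen_ball, mem_ball_self one_pos⟩⟩

theorem norm_le_of_norm_lt_one_of_forall_norm_eq_zpow {k : Type*} [NormedField k] {ϖ : k}
    (hϖ0 : 0 < ‖ϖ‖) (hϖ1 : ‖ϖ‖ < 1) (hdisc : ∀ x : k, x ≠ 0 → ∃ n : ℤ, ‖x‖ = ‖ϖ‖ ^ n)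
    {c : k} (hc : ‖c‖ < 1) : ‖c‖ ≤ ‖ϖ‖ := by
  rcases eq_or_ne c 0 with rfl | hc0
  · simp [hϖ0.le]
  obtain ⟨n, hn⟩ := hdisc c hc0
  rw [hn] at hc ⊢
  have hn1 : 1 ≤ n := (zpow_lt_one_iff_right_of_lt_one₀ hϖ0 hϖ1).mp hc
  simpa using zpow_le_zpow_right_of_le_one₀ hϖ0 hϖ1.le hn1

namespace Red

variable {A : Type*} [NormedRing A] [NormOneClass A] [IsUltrametricDist A]

theorem coe_eq_zero_iff_s10 (w : unitBall A) : (w : Red A) = 0 ↔ ‖(w : A)‖ < 1 := by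
  rw [← RingCon.coe_zero, RingCon.eq]
  show ‖(w : A) - 0‖ < 1 ↔ _
  rw [sub_zero]

theorem norm_sub_out_lt_one (w : unitBall A) : ‖(w : A) - ((w : Red A).out : A)‖ < 1 := by
  have h : (((w : Red A).out : unitBall A) : Red A) = w := Quotient.out_eq _
  exact (RingCon.eq _).mp h.symm

theorem norm_lt_one_of_mem_of_forall_isNilpotent [IsSemisimpleRing (Red A)] {J : Ideal A}
    (hJ : ∀ x ∈ J, IsNilpotent x) {a : A} (ha : a ∈ J) (ha1 : ‖a‖ ≤ 1) : ‖a‖ < 1 := by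
  let π := (redCon A).mk'
  have hred : (J.comap (unitBall A).subtype).map π = ⊥ := by
    refine IsSemisimpleRing.eq_bot_of_forall_isNilpotent fun y hy => ?_
    obtain ⟨w, hw, rfl⟩ := (Ideal.mem_map_iff_of_surjective π (redCon A).mk'_surjective).mp hy
    exact ((IsNilpotent.map_iff Subtype.val_injective).mp (hJ _ hw)).map π
  have hmem : π ⟨a, ha1⟩ ∈ (J.comap (unitBall A).subtype).map π := Ideal.mem_map_of_mem π ha
  rw [hred, Ideal.mem_bot] at hmem
  exact (coe_eq_zero_iff_s10 ⟨a, ha1⟩).mp hmem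

end Red

section LocalField

variable {k A : Type*} [NontriviallyNormedField k] {ϖ : k}
  [NormedRing A] [NormOneClass A] [IsUltrametricDist A]

theorem finiteDimensional_of_finite_red [CompleteSpace k] [NormedSpace k A] [Finite (Red A)]
    (hϖ0 : 0 < ‖ϖ‖) (hϖ1 : ‖ϖ‖ < 1) (hdisc : ∀ x : k, x ≠ 0 → ∃ n : ℤ, ‖x‖ = ‖ϖ‖ ^ n)
    (hval : ∀ a : A, ∃ c : k, ‖a‖ = ‖c‖) : FiniteDimensional k A := by
  let lift : Red A → A := fun q => (q.out : A)
  let V := Submodule.span k (Set.range lift)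
  have : FiniteDimensional k V := FiniteDimensional.span_of_finite k (Set.finite_range lift)
  have hV : V = ⊤ := by
    refine Submodule.eq_top_of_closedBall_subset <|
      Submodule.closedBall_subset_of_forall_exists_norm_sub_le V.closed_of_finiteDimensional
        (norm_pos_iff.mp hϖ0) hϖ1 fun a ha => ?_
    let w : unitBall A := ⟨a, mem_closedBall_zero_iff.mp ha⟩
    refine ⟨lift w, Submodule.subset_span (Set.mem_range_self _), ?_⟩
    obtain ⟨c, hc⟩ := hval (a - lift w)
    rw [hc]
    exact norm_le_of_norm_lt_one_of_forall_norm_eq_zpow hϖ0 hϖ1 hdisc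
      (hc ▸ Red.norm_sub_out_lt_one w)
  exact Module.finite_def.mpr (hV ▸ Submodule.fg_span (Set.finite_range lift))

theorem ringJacobson_eq_bot_of_isSemisimpleRing_red [NormedAlgebra k A] [IsArtinianRing A]
    [IsSemisimpleRing (Red A)] (hval : ∀ a : A, ∃ c : k, ‖a‖ = ‖c‖) : Ring.jacobson A = ⊥ := by
  obtain ⟨n, hn⟩ := IsSemiprimaryRing.isNilpotent (R := A)
  have hnil : ∀ x ∈ Ring.jacobson A, IsNilpotent x :=
    fun x hx => ⟨n, by simpa [hn] using Ideal.pow_mem_pow hx n⟩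
  refine (Submodule.eq_bot_iff _).mpr fun x hx => by_contra fun hx0 => ?_
  obtain ⟨c, hc⟩ := hval x
  have hc0 : ‖c‖ ≠ 0 := hc ▸ norm_ne_zero_iff.mpr hx0
  have hunit : ‖c⁻¹ • x‖ = 1 := by rw [norm_smul, norm_inv, hc, inv_mul_cancel₀ hc0]
  have hmem : c⁻¹ • x ∈ Ring.jacobson A := Submodule.smul_of_tower_mem _ _ hx
  exact (Red.norm_lt_one_of_mem_of_forall_isNilpotent hnil hmem hunit.le).ne hunit

end LocalField

theorem semisimple_of_semisimple_reduction_general {k A : Type*} [NontriviallyNormedField k]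
    [CompleteSpace k]
    (ϖ : k) (hϖ0 : 0 < ‖ϖ‖) (hϖ1 : ‖ϖ‖ < 1)
    (hdisc : ∀ x : k, x ≠ 0 → ∃ n : ℤ, ‖x‖ = ‖ϖ‖ ^ n)
    [NormedRing A] [NormOneClass A] [IsUltrametricDist A]
    [NormedAlgebra k A]
    (hval : ∀ a : A, ∃ c : k, ‖a‖ = ‖c‖)
    (hfin : Finite (Red A)) (hss : IsSemisimpleRing (Red A)) :
    IsSemisimpleRing A ∧ FiniteDimensional k A := by
  have hfd : FiniteDimensional k A := finiteDimensional_of_finite_red hϖ0 hϖ1 hdisc hval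
  have : IsArtinianRing A := IsArtinianRing.of_finite k A
  exact ⟨IsArtinianRing.isSemisimpleRing_iff_jacobson.mpr
    (ringJacobson_eq_bot_of_isSemisimpleRing_red hval), hfd⟩

/-- Theorem (semisimplicity): let `k` be a local field and `𝒜` a Banach `k`-algebra with
`‖𝒜‖ = |k|`. If the residue algebra `𝒜(1)/𝒜(1-)` is a finite dimensional (equivalently,
since the residue field of `k` is finite, a finite) semisimple ring, then `𝒜` is a finite
dimensional semisimple `k`-algebra. -/
theorem semisimple_of_semisimple_reduction {k A : Type*} [NontriviallyNormedField k]
    [CompleteSpace k] [IsUltrametricDist k] [ProperSpace k]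
    (ϖ : k) (hϖ0 : 0 < ‖ϖ‖) (hϖ1 : ‖ϖ‖ < 1)
    (hdisc : ∀ x : k, x ≠ 0 → ∃ n : ℤ, ‖x‖ = ‖ϖ‖ ^ n)
    [NormedRing A] [NormOneClass A] [IsUltrametricDist A] [CompleteSpace A]
    [NormedAlgebra k A]
    (hval : ∀ a : A, ∃ c : k, ‖a‖ = ‖c‖) (hval' : ∀ c : k, ∃ a : A, ‖a‖ = ‖c‖)
    (hfin : Finite (Red A)) (hss : IsSemisimpleRing (Red A)) :
    IsSemisimpleRing A ∧ FiniteDimensional k A :=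
  semisimple_of_semisimple_reduction_general ϖ hϖ0 hϖ1 hdisc hval hfin hss
end

section
/- Let $k$ be a local field with uniformizer $\varpi$, $\mathcal{M}$ a topological monoid, and $(V,\rho)$ a strictly Cartesian unitary representation over $k$. Define $A_0 := k^{\circ}[\mathcal{M}]$ and inductively $A_{i+1} := A_i + \varpi^{-1}\ker(\Pi \circ k[\rho]|_{A_i})$, where $\Pi : \mathrm{B}_k(V)(1) \to \mathrm{End}_{\bar k}(\overline{V})$ is the reduction map. Then $\bigcup_{i \in \mathbb{N}} A_i = k[\rho]^{-1}(\mathrm{B}_k(V)(1))$, and consequently the reduction $\overline{\mathcal{A}}$ of the closure $\mathcal{A}$ of the image of $k[\mathcal{M}]$ in $\mathrm{B}_k(V)$ equals $\bigcup_{i\in\mathbb{N}} \alpha_i$ where $\alpha_i := \mathrm{im}(\Pi \circ k[\rho]|_{A_i})$. -/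
variable {k M V : Type*} [NontriviallyNormedField k] [Monoid M]
  [NormedAddCommGroup V] [NormedSpace k V]

/-- The increasing sequence of integral models `A₀ = k°[ℳ] ⊆ A₁ ⊆ A₂ ⊆ ⋯` of the monoid
algebra, where `A_{i+1} = A_i + ϖ⁻¹ ker(Π ∘ k[ρ]|_{A_i})`: here `L = k[ρ]` is the linear
extension of `ρ` and `ker(Π ∘ L|_{A_i})` consists of the `h ∈ A_i` with `‖L h‖ < 1`. -/
def Aseq (L : MonoidAlgebra k M →ₐ[k] (V →L[k] V)) (ϖ : k) : ℕ → Set (MonoidAlgebra k M)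
  | 0 => {f | ∀ m : M, ‖f.coeff m‖ ≤ 1}
  | i + 1 => {x | ∃ g ∈ Aseq L ϖ i, ∃ h ∈ Aseq L ϖ i, ‖L h‖ < 1 ∧ x = g + ϖ⁻¹ • h}

/-! The integral elements `A₀` land in the unit ball by the ultrametric inequality. Since
`‖V‖ ⊆ |k| = ‖ϖ‖^ℤ`, an operator of norm `< 1` has norm `≤ ‖ϖ‖`, so dividing it by `ϖ` keeps it
in the unit ball; hence every `Aᵢ` maps into the unit ball. Conversely, if `‖L f‖ ≤ 1` and the
coefficients of `f` are bounded by `‖ϖ‖⁻ⁿ`, then `ϖ f ∈ Aₙ₋₁` by induction and `‖L (ϖ f)‖ < 1`,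
so `f = 0 + ϖ⁻¹ (ϖ f) ∈ Aₙ`. For the closure, an operator of norm `≤ 1` at distance `< 1` from
`L f` forces `‖L f‖ ≤ 1`, again by the ultrametric inequality. -/

namespace ContinuousLinearMap

variable {𝕜 E F : Type*} [NontriviallyNormedField 𝕜] [SeminormedAddCommGroup E]
  [SeminormedAddCommGroup F] [NormedSpace 𝕜 E] [NormedSpace 𝕜 F]

instance isUltrametricDist [IsUltrametricDist F] : IsUltrametricDist (E →L[𝕜] F) :=
  IsUltrametricDist.isUltrametricDist_of_forall_norm_add_le_max_norm fun A B =>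
    opNorm_le_bound _ (le_max_of_le_left (norm_nonneg _)) fun v =>
      calc ‖A v + B v‖ ≤ max ‖A v‖ ‖B v‖ := IsUltrametricDist.norm_add_le_max _ _
        _ ≤ max ‖A‖ ‖B‖ * ‖v‖ := by
          rw [max_mul_of_nonneg _ _ (norm_nonneg v)]
          exact max_le_max (A.le_opNorm v) (B.le_opNorm v)

end ContinuousLinearMap

theorem IsUltrametricDist.exists_norm_le_max_norm_sub_lt_of_mem_closure {E : Type*}
    [SeminormedAddCommGroup E] [IsUltrametricDist E] {S : Set E} {x : E} (hx : x ∈ closure S)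
    {r : ℝ} (hr : 0 < r) : ∃ s ∈ S, ‖s‖ ≤ max ‖x‖ r ∧ ‖x - s‖ < r := by
  obtain ⟨s, hs, hxs⟩ := Metric.mem_closure_iff.mp hx r hr
  rw [dist_eq_norm] at hxs
  refine ⟨s, hs, ?_, hxs⟩
  calc ‖s‖ = ‖x + (s - x)‖ := by rw [add_sub_cancel]
    _ ≤ max ‖x‖ ‖s - x‖ := IsUltrametricDist.norm_add_le_max _ _
    _ ≤ max ‖x‖ r := max_le_max le_rfl (norm_sub_rev s x ▸ hxs.le)

theorem MonoidAlgebra.norm_lift_le_one {A : Type*} [SeminormedRing A] [NormedAlgebra k A]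
    [IsUltrametricDist A] (ρ : M →* A) (hρ : ∀ m, ‖ρ m‖ ≤ 1) {f : MonoidAlgebra k M}
    (hf : ∀ m, ‖f.coeff m‖ ≤ 1) : ‖MonoidAlgebra.lift k A M ρ f‖ ≤ 1 := by
  rw [MonoidAlgebra.lift_apply]
  refine IsUltrametricDist.norm_sum_le_of_forall_le_of_nonneg zero_le_one fun m _ => ?_
  calc ‖f.coeff m • ρ m‖ ≤ ‖f.coeff m‖ * ‖ρ m‖ := norm_smul_le _ _
    _ ≤ 1 := mul_le_one₀ (hf m) (norm_nonneg _) (hρ m)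

theorem Finsupp.exists_norm_le_pow {α : Type*} (g : α →₀ k) {r : ℝ} (hr : 1 < r) :
    ∃ n : ℕ, ∀ a, ‖g a‖ ≤ r ^ n := by
  obtain ⟨C, hC⟩ := ((Finsupp.finite_range g).image norm).bddAbove
  obtain ⟨n, hn⟩ := pow_unbounded_of_one_lt C hr
  exact ⟨n, fun a => (hC ⟨g a, Set.mem_range_self a, rfl⟩).trans hn.le⟩

section DiscreteValuation

variable {ϖ : k} (hϖ0 : 0 < ‖ϖ‖) (hϖ1 : ‖ϖ‖ < 1)
  (hdisc : ∀ x : k, x ≠ 0 → ∃ n : ℤ, ‖x‖ = ‖ϖ‖ ^ n)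
include hϖ0 hϖ1 hdisc

theorem norm_le_norm_uniformizer_of_norm_lt_one {x : k} (hx : ‖x‖ < 1) : ‖x‖ ≤ ‖ϖ‖ := by
  rcases eq_or_ne x 0 with rfl | hx0
  · simp [hϖ0.le]
  obtain ⟨n, hn⟩ := hdisc x hx0
  rw [hn] at hx ⊢
  have hn1 : 1 ≤ n := (zpow_lt_one_iff_right_of_lt_one₀ hϖ0 hϖ1).mp hx
  simpa using zpow_le_zpow_right_of_le_one₀ hϖ0 hϖ1.le hn1

theorem norm_le_norm_uniformizer_mul_of_norm_lt {x y : k} (hxy : ‖x‖ < ‖y‖) :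
    ‖x‖ ≤ ‖ϖ‖ * ‖y‖ := by
  have hy : 0 < ‖y‖ := (norm_nonneg x).trans_lt hxy
  have hquot : ‖x / y‖ < 1 := by rwa [norm_div, div_lt_one hy]
  have := norm_le_norm_uniformizer_of_norm_lt_one hϖ0 hϖ1 hdisc hquot
  rwa [norm_div, div_le_iff₀ hy] at this

theorem ContinuousLinearMap.norm_le_norm_uniformizer_of_norm_lt_one {E F : Type*}
    [NormedAddCommGroup E] [NormedSpace k E] [SeminormedAddCommGroup F] [NormedSpace k F]
    (hE : ∀ v : E, ∃ c : k, ‖v‖ = ‖c‖) (hF : ∀ w : F, ∃ c : k, ‖w‖ = ‖c‖)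
    {T : E →L[k] F} (hT : ‖T‖ < 1) : ‖T‖ ≤ ‖ϖ‖ := by
  refine T.opNorm_le_bound hϖ0.le fun v => ?_
  rcases eq_or_ne v 0 with rfl | hv
  · simp
  obtain ⟨c, hc⟩ := hF (T v)
  obtain ⟨d, hd⟩ := hE v
  have hlt : ‖T v‖ < ‖v‖ :=
    calc ‖T v‖ ≤ ‖T‖ * ‖v‖ := T.le_opNorm v
      _ < ‖v‖ := mul_lt_of_lt_one_left (norm_pos_iff.mpr hv) hT
  rw [hc, hd] at hlt ⊢
  exact norm_le_norm_uniformizer_mul_of_norm_lt hϖ0 hϖ1 hdisc hlt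

end DiscreteValuation

namespace Aseq

variable (L : MonoidAlgebra k M →ₐ[k] (V →L[k] V)) (ϖ : k)

theorem zero_mem : ∀ i, (0 : MonoidAlgebra k M) ∈ Aseq L ϖ i
  | 0 => by simp [Aseq]
  | i + 1 => ⟨0, zero_mem i, 0, zero_mem i, by simp, by simp⟩

variable {L ϖ}

theorem norm_le_one_of_mem [IsUltrametricDist V] (h0 : ∀ f ∈ Aseq L ϖ 0, ‖L f‖ ≤ 1)
    (hgap : ∀ T : V →L[k] V, ‖T‖ < 1 → ‖T‖ ≤ ‖ϖ‖) :
    ∀ i, ∀ f ∈ Aseq L ϖ i, ‖L f‖ ≤ 1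
  | 0 => h0
  | i + 1 => by
    rintro _ ⟨g, hg, h, -, hh, rfl⟩
    have hscaled : ‖L (ϖ⁻¹ • h)‖ ≤ 1 := by
      rw [map_smul, norm_smul, norm_inv]
      calc ‖ϖ‖⁻¹ * ‖L h‖ ≤ ‖ϖ‖⁻¹ * ‖ϖ‖ := by gcongr; exact hgap _ hh
        _ ≤ 1 := inv_mul_le_one
    rw [map_add]
    exact (IsUltrametricDist.norm_add_le_max _ _).trans
      (max_le (norm_le_one_of_mem h0 hgap i g hg) hscaled)

theorem mem_of_norm_coeff_le_pow (hϖ0 : ϖ ≠ 0) (hϖ1 : ‖ϖ‖ < 1) :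
    ∀ (n : ℕ) (f : MonoidAlgebra k M), ‖L f‖ ≤ 1 →
      (∀ m, ‖f.coeff m‖ ≤ ‖ϖ‖⁻¹ ^ n) → f ∈ Aseq L ϖ n
  | 0, f, _, hf => fun m => by simpa using hf m
  | n + 1, f, hLf, hf => by
    have hsmall : ‖L (ϖ • f)‖ < 1 := by
      rw [map_smul, norm_smul]
      exact mul_lt_one_of_nonneg_of_lt_one_left (norm_nonneg _) hϖ1 hLf
    have hcoeff : ∀ m, ‖(ϖ • f).coeff m‖ ≤ ‖ϖ‖⁻¹ ^ n := fun m =>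
      calc ‖ϖ • f.coeff m‖ = ‖ϖ‖ * ‖f.coeff m‖ := norm_smul _ _
        _ ≤ ‖ϖ‖ * ‖ϖ‖⁻¹ ^ (n + 1) := by gcongr; exact hf m
        _ = ‖ϖ‖⁻¹ ^ n := by
          rw [pow_succ', ← mul_assoc, mul_inv_cancel₀ (norm_ne_zero_iff.mpr hϖ0), one_mul]
    refine ⟨0, zero_mem L ϖ n, ϖ • f, ?_, hsmall, ?_⟩
    · exact mem_of_norm_coeff_le_pow hϖ0 hϖ1 n _ hsmall.le hcoeff
    · rw [zero_add, smul_smul, inv_mul_cancel₀ hϖ0, one_smul]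

theorem iUnion_eq [IsUltrametricDist V] (hϖ0 : ϖ ≠ 0) (hϖ1 : ‖ϖ‖ < 1)
    (h0 : ∀ f ∈ Aseq L ϖ 0, ‖L f‖ ≤ 1)
    (hgap : ∀ T : V →L[k] V, ‖T‖ < 1 → ‖T‖ ≤ ‖ϖ‖) :
    ⋃ i, Aseq L ϖ i = {f | ‖L f‖ ≤ 1} := by
  refine Set.Subset.antisymm
    (Set.iUnion_subset fun i f hf => norm_le_one_of_mem h0 hgap i f hf) fun f hf => ?_
  obtain ⟨n, hn⟩ := f.coeff.exists_norm_le_pow ((one_lt_inv₀ (norm_pos_iff.mpr hϖ0)).mpr hϖ1)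
  exact Set.mem_iUnion.mpr ⟨n, mem_of_norm_coeff_le_pow hϖ0 hϖ1 n f hf hn⟩

end Aseq

theorem union_Aseq_eq_preimage_unitBall_general {k M V : Type*}
    [NontriviallyNormedField k]
    (ϖ : k) (hϖ0 : 0 < ‖ϖ‖) (hϖ1 : ‖ϖ‖ < 1)
    (hdisc : ∀ x : k, x ≠ 0 → ∃ n : ℤ, ‖x‖ = ‖ϖ‖ ^ n)
    [Monoid M]
    [NormedAddCommGroup V] [NormedSpace k V] [IsUltrametricDist V]
    (ρ : M →* (V →L[k] V)) (hunit : ∀ m : M, ‖ρ m‖ ≤ 1)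
    (hcart : ∀ v : V, ∃ c : k, ‖v‖ = ‖c‖) :
    (⋃ i, Aseq (MonoidAlgebra.lift k (V →L[k] V) M ρ) ϖ i) =
      {f : MonoidAlgebra k M | ‖MonoidAlgebra.lift k (V →L[k] V) M ρ f‖ ≤ 1} ∧
    ∀ T ∈ closure (Set.range fun f : MonoidAlgebra k M =>
        MonoidAlgebra.lift k (V →L[k] V) M ρ f), ‖T‖ ≤ 1 →
      ∃ i, ∃ f ∈ Aseq (MonoidAlgebra.lift k (V →L[k] V) M ρ) ϖ i,
        ‖T - MonoidAlgebra.lift k (V →L[k] V) M ρ f‖ < 1 := by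
  set L := MonoidAlgebra.lift k (V →L[k] V) M ρ
  have hunion : ⋃ i, Aseq L ϖ i = {f | ‖L f‖ ≤ 1} :=
    Aseq.iUnion_eq (norm_pos_iff.mp hϖ0) hϖ1
      (fun _ hf => MonoidAlgebra.norm_lift_le_one ρ hunit hf) fun _ hT =>
        ContinuousLinearMap.norm_le_norm_uniformizer_of_norm_lt_one hϖ0 hϖ1 hdisc hcart hcart hT
  refine ⟨hunion, fun T hT hT1 => ?_⟩
  obtain ⟨_, ⟨f, rfl⟩, hf1, hTf⟩ :=
    IsUltrametricDist.exists_norm_le_max_norm_sub_lt_of_mem_closure hT one_pos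
  have hf : f ∈ ⋃ i, Aseq L ϖ i := hunion ▸ hf1.trans (max_le hT1 le_rfl)
  obtain ⟨i, hi⟩ := Set.mem_iUnion.mp hf
  exact ⟨i, f, hi, hTf⟩

/-- Let `k` be a local field with uniformizer `ϖ`, `ℳ` a topological monoid and `(V, ρ)` a
strictly Cartesian unitary representation. Then `⋃ᵢ Aᵢ = k[ρ]⁻¹(B_k(V)(1))`, and
consequently the reduction of the closure `𝒜` of the image of `k[ℳ]` in `B_k(V)` is
`⋃ᵢ αᵢ` with `αᵢ = im(Π ∘ k[ρ]|_{Aᵢ})`: every element of `𝒜(1)` agrees modulo `𝒜(1-)`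
(i.e. up to norm `< 1`) with the image of an element of some `Aᵢ`. -/
theorem union_Aseq_eq_preimage_unitBall {k M V : Type*}
    [NontriviallyNormedField k] [CompleteSpace k] [IsUltrametricDist k] [ProperSpace k]
    (ϖ : k) (hϖ0 : 0 < ‖ϖ‖) (hϖ1 : ‖ϖ‖ < 1)
    (hdisc : ∀ x : k, x ≠ 0 → ∃ n : ℤ, ‖x‖ = ‖ϖ‖ ^ n)
    [Monoid M] [TopologicalSpace M] [ContinuousMul M]
    [NormedAddCommGroup V] [NormedSpace k V] [CompleteSpace V] [IsUltrametricDist V]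
    (ρ : M →* (V →L[k] V)) (hunit : ∀ m : M, ‖ρ m‖ ≤ 1)
    (hcont : Continuous fun p : M × V => ρ p.1 p.2)
    (hcart : ∀ v : V, ∃ c : k, ‖v‖ = ‖c‖) :
    (⋃ i, Aseq (MonoidAlgebra.lift k (V →L[k] V) M ρ) ϖ i) =
      {f : MonoidAlgebra k M | ‖MonoidAlgebra.lift k (V →L[k] V) M ρ f‖ ≤ 1} ∧
    ∀ T ∈ closure (Set.range fun f : MonoidAlgebra k M =>
        MonoidAlgebra.lift k (V →L[k] V) M ρ f), ‖T‖ ≤ 1 →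
      ∃ i, ∃ f ∈ Aseq (MonoidAlgebra.lift k (V →L[k] V) M ρ) ϖ i,
        ‖T - MonoidAlgebra.lift k (V →L[k] V) M ρ f‖ < 1 :=
  union_Aseq_eq_preimage_unitBall_general ϖ hϖ0 hϖ1 hdisc ρ hunit hcart
end
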